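/- arXiv:2001.00700 — 4 statements merged into one kernel-verified Lean document; each statement's English description precedes it below -/
import Mathlib

section
/- Under Assumptions 1 and 3, if a₁<0 or a₂<0, then for every y∈𝕊₊ the occupation measure (q̃_{y,y'}; y'∈𝕊₊) is finite; more precisely, Σ_{y'∈𝕊₊} q̃_{y,y'} = E(τ | Y₀=y) < ∞. -/
open scoped ENNReal

namespace MMRW2d

/-! ## General kernels over a countable index set, with entries in `ℝ≥0∞` -/

/-- Kernel (infinite matrix) multiplication over `ℝ≥0∞`. -/
noncomputable def kmul {α : Type*} (p q : α → α → ℝ≥0∞) : α → α → ℝ≥0∞ :=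
  fun i j => ∑' k, p i k * q k j

/-- `n`-step kernel power. -/
noncomputable def kpow {α : Type*} [DecidableEq α] (p : α → α → ℝ≥0∞) : ℕ → α → α → ℝ≥0∞
  | 0 => fun i j => if i = j then 1 else 0
  | n + 1 => kmul p (kpow p n)

/-- Convergence parameter `cp(A) = sup{r ≥ 0 : Σ_n rⁿ Aⁿ < ∞ entrywise}`. -/
noncomputable def cp {α : Type*} [DecidableEq α] (p : α → α → ℝ≥0∞) : ℝ≥0∞ :=
  sSup {r : ℝ≥0∞ | ∀ i j, (∑' n : ℕ, r ^ n * kpow p n i j) ≠ ⊤}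

/-- `R` is the minimal nonnegative solution of `R = R² A₋₁ + R A₀ + A₁`. -/
def IsMinimalSolution {κ : Type*} (Am A0 Ap R : κ → κ → ℝ≥0∞) : Prop :=
  (∀ i j, R i j = kmul (kmul R R) Am i j + kmul R A0 i j + Ap i j) ∧
  ∀ S : κ → κ → ℝ≥0∞,
    (∀ i j, S i j = kmul (kmul S S) Am i j + kmul S A0 i j + Ap i j) → ∀ i j, R i j ≤ S i j

variable {s₀ : ℕ}

/-! ## The 2d skip-free Markov-modulated random walk -/

/-- The defining data of a 2d-MMRW: the blocks `A_{i,j}` are nonnegative, vanish outside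
`i,j ∈ {-1,0,1}`, and `Σ_{i,j} A_{i,j}` is stochastic. -/
structure IsMMRW (A : ℤ → ℤ → Matrix (Fin s₀) (Fin s₀) ℝ) : Prop where
  nonneg : ∀ i j a b, 0 ≤ A i j a b
  skipfree : ∀ i j : ℤ, (i ∉ Finset.Icc (-1 : ℤ) 1 ∨ j ∉ Finset.Icc (-1 : ℤ) 1) → A i j = 0
  stochastic : ∀ a, ∑ i ∈ Finset.Icc (-1 : ℤ) 1, ∑ j ∈ Finset.Icc (-1 : ℤ) 1, ∑ b, A i j a b = 1

/-- The transition kernel of the 2d-MMRW `{Y_n}` on `𝕊 = ℤ² × S₀`. -/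
noncomputable def ker (A : ℤ → ℤ → Matrix (Fin s₀) (Fin s₀) ℝ) :
    (ℤ × ℤ × Fin s₀) → (ℤ × ℤ × Fin s₀) → ℝ≥0∞ :=
  fun y y' => ENNReal.ofReal (A (y'.1 - y.1) (y'.2.1 - y.2.1) y.2.2 y'.2.2)

/-- The substochastic kernel `P₊`, the restriction of `P` to `𝕊₊ = ℤ₊² × S₀`. -/
noncomputable def kerPlus (A : ℤ → ℤ → Matrix (Fin s₀) (Fin s₀) ℝ) :
    (ℕ × ℕ × Fin s₀) → (ℕ × ℕ × Fin s₀) → ℝ≥0∞ :=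
  fun y y' =>
    ENNReal.ofReal (A ((y'.1 : ℤ) - (y.1 : ℤ)) ((y'.2.1 : ℤ) - (y.2.1 : ℤ)) y.2.2 y'.2.2)

/-- The occupation measure: `q̃_{y,y'} = E[Σ_{n<τ} 1(Y_n = y') | Y₀ = y] = Σ_n [P₊ⁿ]_{y,y'}`,
the `(y,y')` entry of the fundamental matrix of `P₊`. -/
noncomputable def occ (A : ℤ → ℤ → Matrix (Fin s₀) (Fin s₀) ℝ) (y y' : ℕ × ℕ × Fin s₀) :
    ℝ≥0∞ :=
  ∑' n : ℕ, kpow (kerPlus A) n y y'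

/-- The expected exit time `E(τ | Y₀ = y) = Σ_{n≥0} P(τ > n | Y₀ = y)
= Σ_n Σ_{y'∈𝕊₊} [P₊ⁿ]_{y,y'}`. -/
noncomputable def Etau (A : ℤ → ℤ → Matrix (Fin s₀) (Fin s₀) ℝ) (y : ℕ × ℕ × Fin s₀) : ℝ≥0∞ :=
  ∑' n : ℕ, ∑' y' : ℕ × ℕ × Fin s₀, kpow (kerPlus A) n y y'

/-- Assumption 1: `{Y_n}` is irreducible and aperiodic (equivalently, primitive). -/
def Assumption1 (A : ℤ → ℤ → Matrix (Fin s₀) (Fin s₀) ℝ) : Prop :=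
  ∀ y y' : ℤ × ℤ × Fin s₀, ∃ N : ℕ, ∀ n ≥ N, 0 < kpow (ker A) n y y'

/-- Assumption 3: the substochastic matrix `P₊` is irreducible. -/
def Assumption3 (A : ℤ → ℤ → Matrix (Fin s₀) (Fin s₀) ℝ) : Prop :=
  ∀ y y' : ℕ × ℕ × Fin s₀, ∃ n : ℕ, 1 ≤ n ∧ 0 < kpow (kerPlus A) n y y'

/-- Mean drift `a₁ = π_{*,*}(−A_{−1,*}+A_{1,*})𝟏` in the first coordinate. -/
noncomputable def a1 (A : ℤ → ℤ → Matrix (Fin s₀) (Fin s₀) ℝ) (π : Fin s₀ → ℝ) : ℝ :=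
  ∑ a, π a * ∑ b, ∑ k ∈ Finset.Icc (-1 : ℤ) 1, (A 1 k a b - A (-1) k a b)

/-- Mean drift `a₂ = π_{*,*}(−A_{*,−1}+A_{*,1})𝟏` in the second coordinate. -/
noncomputable def a2 (A : ℤ → ℤ → Matrix (Fin s₀) (Fin s₀) ℝ) (π : Fin s₀ → ℝ) : ℝ :=
  ∑ a, π a * ∑ b, ∑ k ∈ Finset.Icc (-1 : ℤ) 1, (A k 1 a b - A k (-1) a b)

/-- `π` is the stationary distribution of the stochastic matrix `A_{*,*} = Σ_{i,j} A_{i,j}`. -/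
def IsStationary (A : ℤ → ℤ → Matrix (Fin s₀) (Fin s₀) ℝ) (π : Fin s₀ → ℝ) : Prop :=
  (∀ a, 0 ≤ π a) ∧ (∑ a, π a = 1) ∧
    ∀ b, (∑ a, π a * ∑ i ∈ Finset.Icc (-1 : ℤ) 1, ∑ j ∈ Finset.Icc (-1 : ℤ) 1, A i j a b) = π b

/-- Assumption 2: `a₁ < 0` or `a₂ < 0`. -/
def Assumption2 (A : ℤ → ℤ → Matrix (Fin s₀) (Fin s₀) ℝ) : Prop :=
  ∃ π : Fin s₀ → ℝ, IsStationary A π ∧ (a1 A π < 0 ∨ a2 A π < 0)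

/-! ## Spectral radius and the sets Γ, Γ̄, 𝒟 -/

/-- Spectral radius (maximum modulus of the eigenvalues) of a complex matrix. -/
noncomputable def sprC (M : Matrix (Fin s₀) (Fin s₀) ℂ) : ℝ :=
  sSup ((fun z => ‖z‖) '' spectrum ℂ M)

/-- The matrix moment generating function `A_{*,*}(θ₁,θ₂) = Σ_{i,j} e^{iθ₁+jθ₂} A_{i,j}`. -/
noncomputable def Ass (A : ℤ → ℤ → Matrix (Fin s₀) (Fin s₀) ℝ) (θ₁ θ₂ : ℝ) :
    Matrix (Fin s₀) (Fin s₀) ℝ :=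
  ∑ i ∈ Finset.Icc (-1 : ℤ) 1, ∑ j ∈ Finset.Icc (-1 : ℤ) 1,
    Real.exp ((i : ℝ) * θ₁ + (j : ℝ) * θ₂) • A i j

/-- `χ(θ₁,θ₂) = spr(A_{*,*}(θ₁,θ₂))`. -/
noncomputable def chi (A : ℤ → ℤ → Matrix (Fin s₀) (Fin s₀) ℝ) (θ₁ θ₂ : ℝ) : ℝ :=
  sprC ((Ass A θ₁ θ₂).map Complex.ofReal)

/-- `Γ = {(θ₁,θ₂) : spr(A_{*,*}(θ₁,θ₂)) < 1}`. -/
def GammaSet (A : ℤ → ℤ → Matrix (Fin s₀) (Fin s₀) ℝ) : Set (ℝ × ℝ) :=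
  {θ | chi A θ.1 θ.2 < 1}

/-- `Γ̄ = {(θ₁,θ₂) : spr(A_{*,*}(θ₁,θ₂)) ≤ 1}`. -/
def GammaBar (A : ℤ → ℤ → Matrix (Fin s₀) (Fin s₀) ℝ) : Set (ℝ × ℝ) :=
  {θ | chi A θ.1 θ.2 ≤ 1}

/-- `𝒟 = {θ : θ < θ' componentwise for some θ' ∈ Γ}`. -/
def Dset (A : ℤ → ℤ → Matrix (Fin s₀) (Fin s₀) ℝ) : Set (ℝ × ℝ) :=
  {θ | ∃ θ' ∈ GammaSet A, θ.1 < θ'.1 ∧ θ.2 < θ'.2}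

/-! ## Moment generating function of the occupation measures and its domain -/

/-- `(j,j')`-entry of `Φ_x(θ₁,θ₂) = Σ_{k₁,k₂≥0} e^{k₁θ₁+k₂θ₂} N_{x,(k₁,k₂)}`. -/
noncomputable def Phi (A : ℤ → ℤ → Matrix (Fin s₀) (Fin s₀) ℝ) (x : ℕ × ℕ) (θ : ℝ × ℝ)
    (j j' : Fin s₀) : ℝ≥0∞ :=
  ∑' k : ℕ × ℕ, ENNReal.ofReal (Real.exp ((k.1 : ℝ) * θ.1 + (k.2 : ℝ) * θ.2)) *
    occ A (x.1, x.2, j) (k.1, k.2, j')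

/-- `𝒟_x`: the interior of the set where `Φ_x` is (entrywise) finite. -/
noncomputable def domPhi (A : ℤ → ℤ → Matrix (Fin s₀) (Fin s₀) ℝ) (x : ℕ × ℕ) : Set (ℝ × ℝ) :=
  interior {θ : ℝ × ℝ | ∀ j j', Phi A x θ j j' ≠ ⊤}

/-! ## QBD blocks and rate matrices -/

/-- Block `A^{(1)}_i`: matrix indexed by `ℤ₊ × S₀`, block tridiagonal with blocks `A_{i,·}`. -/
noncomputable def A1blk (A : ℤ → ℤ → Matrix (Fin s₀) (Fin s₀) ℝ) (i : ℤ) :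
    (ℕ × Fin s₀) → (ℕ × Fin s₀) → ℝ≥0∞ :=
  fun y y' => ENNReal.ofReal (A i ((y'.1 : ℤ) - (y.1 : ℤ)) y.2 y'.2)

/-- Block `A^{(2)}_i`: matrix indexed by `ℤ₊ × S₀`, block tridiagonal with blocks `A_{·,i}`. -/
noncomputable def A2blk (A : ℤ → ℤ → Matrix (Fin s₀) (Fin s₀) ℝ) (i : ℤ) :
    (ℕ × Fin s₀) → (ℕ × Fin s₀) → ℝ≥0∞ :=
  fun y y' => ENNReal.ofReal (A ((y'.1 : ℤ) - (y.1 : ℤ)) i y.2 y'.2)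

/-- Block `A^{(1,1)}_d`, indexed by the phase space `ℤ × S₀` of the QBD representation with
level `min{X₁,X₂}` and phase `(X₁−X₂, J)`: from a state with phase `k`, a jump `(i,l)` moves
the phase to `k+i−l` and the level by `min(max(k,0)+i, max(−k,0)+l)`. -/
noncomputable def A11blk (A : ℤ → ℤ → Matrix (Fin s₀) (Fin s₀) ℝ) (d : ℤ) :
    (ℤ × Fin s₀) → (ℤ × Fin s₀) → ℝ≥0∞ :=
  fun y y' => ∑ i ∈ Finset.Icc (-1 : ℤ) 1, ∑ l ∈ Finset.Icc (-1 : ℤ) 1,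
    if y'.1 = y.1 + i - l ∧ d = min (max y.1 0 + i) (max (-y.1) 0 + l) then
      ENNReal.ofReal (A i l y.2 y'.2) else 0

/-! ## Radii of convergence of the generating functions of the occupation measures -/

/-- Radius of convergence `r^{(1)}_{y,(x₂',j')}` of `Σ_k q̃_{y,(k,x₂',j')} z^k`. -/
noncomputable def r1 (A : ℤ → ℤ → Matrix (Fin s₀) (Fin s₀) ℝ) (y : ℕ × ℕ × Fin s₀)
    (x₂' : ℕ) (j' : Fin s₀) : ℝ≥0∞ :=
  sSup {r : ℝ≥0∞ | (∑' k : ℕ, r ^ k * occ A y (k, x₂', j')) ≠ ⊤}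

/-- Radius of convergence `r^{(2)}_{y,(x₁',j')}` of `Σ_k q̃_{y,(x₁',k,j')} z^k`. -/
noncomputable def r2 (A : ℤ → ℤ → Matrix (Fin s₀) (Fin s₀) ℝ) (y : ℕ × ℕ × Fin s₀)
    (x₁' : ℕ) (j' : Fin s₀) : ℝ≥0∞ :=
  sSup {r : ℝ≥0∞ | (∑' k : ℕ, r ^ k * occ A y (x₁', k, j')) ≠ ⊤}

/-- Radius of convergence `r^{(1,1)}_{(k,j),(k',j')}` of
`φ̂^{(1,1)}_{(k,j),(k',j')}(z) = Σ_l q̃_{(k∨0,−(k∧0),j),(l+(k'∨0),l−(k'∧0),j')} z^l`. -/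
noncomputable def r11 (A : ℤ → ℤ → Matrix (Fin s₀) (Fin s₀) ℝ) (k : ℤ) (j : Fin s₀)
    (k' : ℤ) (j' : Fin s₀) : ℝ≥0∞ :=
  sSup {r : ℝ≥0∞ | (∑' l : ℕ,
    r ^ l * occ A ((max k 0).toNat, (-(min k 0)).toNat, j)
      (l + (max k' 0).toNat, l + (-(min k' 0)).toNat, j')) ≠ ⊤}

/-! ## The complex matrix function Ĉ(z,w) -/

/-- `Ĉ(z,w) = Σ_{i,j∈{−1,0,1}} zⁱ wʲ A_{i,j}` as a complex matrix. -/
noncomputable def Chat (A : ℤ → ℤ → Matrix (Fin s₀) (Fin s₀) ℝ) (z w : ℂ) :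
    Matrix (Fin s₀) (Fin s₀) ℂ :=
  ∑ i ∈ Finset.Icc (-1 : ℤ) 1, ∑ j ∈ Finset.Icc (-1 : ℤ) 1,
    (z ^ i * w ^ j) • (A i j).map Complex.ofReal

/-! ## The lifted chain `ᶜY` (quotients and remainders mod `c`) -/

/-- The block `ᶜA_{i,j}` of the lifted 2d-MMRW, expressed via the original blocks:
`ᶜA_{i,j}((m₁,m₂,a),(m₁',m₂',b)) = A_{c₁ i + (m₁'−m₁), c₂ j + (m₂'−m₂)}(a,b)`. -/
noncomputable def cA (A : ℤ → ℤ → Matrix (Fin s₀) (Fin s₀) ℝ) (c₁ c₂ : ℕ) (i j : ℤ) :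
    Matrix (Fin c₁ × Fin c₂ × Fin s₀) (Fin c₁ × Fin c₂ × Fin s₀) ℝ :=
  Matrix.of fun y y' =>
    A ((c₁ : ℤ) * i + (((y'.1 : ℕ) : ℤ) - ((y.1 : ℕ) : ℤ)))
      ((c₂ : ℤ) * j + (((y'.2.1 : ℕ) : ℤ) - ((y.2.1 : ℕ) : ℤ))) y.2.2 y'.2.2

/-- `ᶜA_{*,*}(θ₁,θ₂) = Σ_{i,j} e^{iθ₁+jθ₂} ᶜA_{i,j}`. -/
noncomputable def cAss (A : ℤ → ℤ → Matrix (Fin s₀) (Fin s₀) ℝ) (c₁ c₂ : ℕ) (θ₁ θ₂ : ℝ) :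
    Matrix (Fin c₁ × Fin c₂ × Fin s₀) (Fin c₁ × Fin c₂ × Fin s₀) ℝ :=
  ∑ i ∈ Finset.Icc (-1 : ℤ) 1, ∑ j ∈ Finset.Icc (-1 : ℤ) 1,
    Real.exp ((i : ℝ) * θ₁ + (j : ℝ) * θ₂) • cA A c₁ c₂ i j

end MMRW2d

/-!
Let `d a` be the mean increment of `X₁` in one step from phase `a`, so that `a₁ = π ⬝ᵥ d`.
Since `A_{*,*}` is stochastic and irreducible (Assumption 1) and `π ⬝ᵥ (d - a₁) = 0`, the
Poisson equation `(1 - A_{*,*}) g = d - a₁` has a solution, which may be shifted so that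
`g ≥ 1`. Then `V (x₁, x₂, j) = x₁ + g j` is a nonnegative Lyapunov function with
`P₊ V + (-a₁) ≤ V` on `𝕊₊`: the phase correction `g` turns the mean drift `d j` of `x₁` into
the constant `a₁`, and killing outside `𝕊₊` only lowers `P₊ V`. Iterating this inequality gives
the Foster–Lyapunov bound `-a₁ · E(τ | Y₀ = y) ≤ V y`, and the case `a₂ < 0` is the case
`a₁ < 0` for the walk with its coordinates exchanged.
-/

namespace Matrix

variable {ι : Type*} [Fintype ι] [DecidableEq ι] {M : Matrix ι ι ℝ}

theorem IsIrreducible.eq_of_mulVec_eq_self (hM : M.IsIrreducible) (hrow : M ∈ rowStochastic ℝ ι)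
    {v : ι → ℝ} (hv : M *ᵥ v = v) (a b : ι) : v a = v b := by
  have : Nonempty ι := ⟨a⟩
  obtain ⟨c, hc⟩ := Finite.exists_max v
  suffices h : ∀ d, v d = v c by rw [h a, h b]
  intro d
  obtain ⟨k, -, hk⟩ := (isIrreducible_iff_exists_pow_pos hM.nonneg).1 hM c d
  have hkv : ∀ n, (M ^ n) *ᵥ v = v := by
    intro n
    induction n with
    | zero => simp
    | succ n ih => rw [pow_succ', ← mulVec_mulVec, ih, hv]
  have hMk := pow_mem hrow k
  -- maximum principle: `v c` is an average of values `≤ v c`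
  have hzero : ∑ e, (M ^ k) c e * (v c - v e) = 0 := by
    simp only [mul_sub, Finset.sum_sub_distrib, ← Finset.sum_mul,
      sum_row_of_mem_rowStochastic hMk, one_mul]
    rw [sub_eq_zero]
    exact (congrFun (hkv k) c).symm
  have hd := (Finset.sum_eq_zero_iff_of_nonneg fun e _ =>
    mul_nonneg (nonneg_of_mem_rowStochastic hMk) (sub_nonneg.2 (hc e))).1 hzero d
    (Finset.mem_univ d)
  have := (mul_eq_zero.1 hd).resolve_left hk.ne'
  linarith

theorem IsIrreducible.exists_one_sub_mulVec_eq (hM : M.IsIrreducible)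
    (hrow : M ∈ rowStochastic ℝ ι) {π : ι → ℝ} (hπ : π ᵥ* M = π) (hπ1 : ∑ a, π a = 1)
    {u : ι → ℝ} (hu : π ⬝ᵥ u = 0) : ∃ h, (1 - M) *ᵥ h = u := by
  set T := (1 - M).mulVecLin
  set φ := dotProductBilin ℝ ℝ π
  have hrange : LinearMap.range T ≤ LinearMap.ker φ := by
    rintro _ ⟨v, rfl⟩
    simp [T, φ, dotProduct_mulVec, hπ]
  have hker : LinearMap.ker T ≤ ℝ ∙ (1 : ι → ℝ) := by
    intro v hv
    have hMv : M *ᵥ v = v := by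
      simpa [T, sub_mulVec, sub_eq_zero, eq_comm] using hv
    refine Submodule.mem_span_singleton.2 ⟨π ⬝ᵥ v, funext fun b => ?_⟩
    simp [dotProduct, hM.eq_of_mulVec_eq_self hrow hMv _ b, ← Finset.sum_mul, hπ1]
  have hφ : LinearMap.range φ = ⊤ :=
    LinearMap.range_eq_top.2 fun r => ⟨r • 1, by simp [φ, dotProduct_one, hπ1]⟩
  have hT := LinearMap.finrank_range_add_finrank_ker T
  have hφ' := LinearMap.finrank_range_add_finrank_ker φ
  have hker1 : Module.finrank ℝ (LinearMap.ker T) ≤ 1 :=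
    (Submodule.finrank_mono hker).trans ((finrank_span_le_card {(1 : ι → ℝ)}).trans (by simp))
  rw [hφ, finrank_top, Module.finrank_self] at hφ'
  have heq := Submodule.eq_of_le_of_finrank_le hrange (by omega)
  exact LinearMap.mem_range.1 (heq ▸ show u ∈ LinearMap.ker φ from hu)

end Matrix

namespace MMRW2d

open Matrix Finset

section Kernel

variable {α : Type*} [DecidableEq α]

theorem tsum_kpow_zero (P : α → α → ℝ≥0∞) (y : α) : ∑' y', kpow P 0 y y' = 1 := by
  simp [kpow]

theorem tsum_kpow_succ (P : α → α → ℝ≥0∞) (n : ℕ) (y : α) :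
    ∑' y', kpow P (n + 1) y y' = ∑' z, P y z * ∑' y', kpow P n z y' := by
  simp only [kpow, kmul]
  rw [ENNReal.tsum_comm]
  simp_rw [ENNReal.tsum_mul_left]

/-- The Foster–Lyapunov bound on the expected lifetime of the chain of a substochastic
kernel `P`. -/
theorem mul_tsum_tsum_kpow_le (P : α → α → ℝ≥0∞) (V : α → ℝ≥0∞) (ε : ℝ≥0∞)
    (hV : ∀ y, ∑' z, P y z * V z + ε ≤ V y) (y : α) :
    ε * ∑' n, ∑' y', kpow P n y y' ≤ V y := by
  suffices h : ∀ N y, ε * ∑ n ∈ Finset.range N, ∑' y', kpow P n y y' ≤ V y by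
    rw [ENNReal.tsum_eq_iSup_nat, ENNReal.mul_iSup]
    exact iSup_le fun N => h N y
  intro N
  induction N with
  | zero => simp
  | succ N ih =>
    intro y
    calc ε * ∑ n ∈ Finset.range (N + 1), ∑' y', kpow P n y y'
        = ∑' z, P y z * (ε * ∑ n ∈ Finset.range N, ∑' y', kpow P n z y') + ε := by
          simp only [Finset.sum_range_succ', tsum_kpow_succ, tsum_kpow_zero, mul_add, mul_one,
            Finset.mul_sum]
          rw [Summable.tsum_finsetSum fun _ _ => ENNReal.summable]
          refine congrArg (· + ε) (Finset.sum_congr rfl fun n _ => ?_)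
          rw [← ENNReal.tsum_mul_left]
          exact tsum_congr fun z => mul_left_comm _ _ _
      _ ≤ ∑' z, P y z * V z + ε := by gcongr with z; exact ih z
      _ ≤ V y := hV y

theorem kpow_equiv_apply {β : Type*} [DecidableEq β] (e : α ≃ β) {P : α → α → ℝ≥0∞}
    {Q : β → β → ℝ≥0∞} (hPQ : ∀ x y, Q (e x) (e y) = P x y) (n : ℕ) (x y : α) :
    kpow Q n (e x) (e y) = kpow P n x y := by
  induction n generalizing x with
  | zero => simp [kpow, e.injective.eq_iff]
  | succ n ih =>
    simp only [kpow, kmul]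
    rw [← e.tsum_eq]
    simp only [hPQ, ih]

theorem pow_apply_pos_of_kpow_ne_zero {ι : Type*} [Fintype ι] [DecidableEq ι]
    {P : α → α → ℝ≥0∞} {M : Matrix ι ι ℝ} (φ : α → ι) (hM : ∀ a b, 0 ≤ M a b)
    (hPM : ∀ x z, P x z ≠ 0 → 0 < M (φ x) (φ z)) {n : ℕ} {x y : α}
    (h : kpow P n x y ≠ 0) : 0 < (M ^ n) (φ x) (φ y) := by
  induction n generalizing x with
  | zero =>
    obtain rfl : x = y := by simpa [kpow] using h
    simp
  | succ n ih =>
    obtain ⟨z, hz⟩ : ∃ z, P x z * kpow P n z y ≠ 0 := by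
      by_contra! h0
      exact h (ENNReal.tsum_eq_zero.2 h0)
    obtain ⟨hxz, hzy⟩ := mul_ne_zero_iff.1 hz
    rw [pow_succ', mul_apply]
    exact Finset.sum_pos' (fun c _ => mul_nonneg (hM _ _) (pow_apply_nonneg hM _ _ _))
      ⟨φ z, Finset.mem_univ _, mul_pos (hPM x z hxz) (ih hzy)⟩

end Kernel

variable {s₀ : ℕ} {A : ℤ → ℤ → Matrix (Fin s₀) (Fin s₀) ℝ}

theorem sum_Icc_neg_one_one {M : Type*} [AddCommMonoid M] (f : ℤ → M) :
    ∑ i ∈ Icc (-1 : ℤ) 1, f i = f (-1) + f 0 + f 1 := by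
  rw [show Icc (-1 : ℤ) 1 = {-1, 0, 1} by decide, sum_insert (by decide),
    sum_insert (by decide), sum_singleton, add_assoc]

/-- The phase transition matrix `A_{*,*}`. -/
noncomputable def phaseMatrix (A : ℤ → ℤ → Matrix (Fin s₀) (Fin s₀) ℝ) :
    Matrix (Fin s₀) (Fin s₀) ℝ :=
  ∑ i ∈ Icc (-1 : ℤ) 1, ∑ j ∈ Icc (-1 : ℤ) 1, A i j

/-- The mean increment of `X₁` in one step from phase `a`. -/
noncomputable def phaseDrift (A : ℤ → ℤ → Matrix (Fin s₀) (Fin s₀) ℝ) : Fin s₀ → ℝ :=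
  fun a => ∑ b, ∑ k ∈ Icc (-1 : ℤ) 1, (A 1 k a b - A (-1) k a b)

theorem a1_eq_dotProduct_phaseDrift (A : ℤ → ℤ → Matrix (Fin s₀) (Fin s₀) ℝ) (π : Fin s₀ → ℝ) :
    a1 A π = π ⬝ᵥ phaseDrift A :=
  rfl

theorem phaseMatrix_apply (A : ℤ → ℤ → Matrix (Fin s₀) (Fin s₀) ℝ) (a b : Fin s₀) :
    phaseMatrix A a b = ∑ i ∈ Icc (-1 : ℤ) 1, ∑ j ∈ Icc (-1 : ℤ) 1, A i j a b := by
  simp [phaseMatrix, Matrix.sum_apply]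

theorem IsMMRW.phaseMatrix_mem_rowStochastic (hA : IsMMRW A) :
    phaseMatrix A ∈ rowStochastic ℝ (Fin s₀) := by
  refine mem_rowStochastic_iff_sum.2 ⟨fun a b => ?_, fun a => ?_⟩
  · rw [phaseMatrix_apply]
    exact sum_nonneg fun i _ => sum_nonneg fun j _ => hA.nonneg i j a b
  · simp_rw [phaseMatrix_apply]
    rw [sum_comm, ← hA.stochastic a]
    exact sum_congr rfl fun i _ => sum_comm

theorem IsStationary.vecMul_phaseMatrix {π : Fin s₀ → ℝ} (hπ : IsStationary A π) :
    π ᵥ* phaseMatrix A = π :=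
  funext fun b => by simpa [vecMul, dotProduct, phaseMatrix_apply] using hπ.2.2 b

theorem IsMMRW.phaseMatrix_pos_of_ker_ne_zero (hA : IsMMRW A) {x z : ℤ × ℤ × Fin s₀}
    (h : ker A x z ≠ 0) : 0 < phaseMatrix A x.2.2 z.2.2 := by
  have hpos : 0 < A (z.1 - x.1) (z.2.1 - x.2.1) x.2.2 z.2.2 := by
    simpa [ker] using h
  have hmem : z.1 - x.1 ∈ Icc (-1 : ℤ) 1 ∧ z.2.1 - x.2.1 ∈ Icc (-1 : ℤ) 1 := by
    by_contra hc
    rw [hA.skipfree _ _ (not_and_or.1 hc)] at hpos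
    exact lt_irrefl 0 hpos
  rw [phaseMatrix_apply]
  refine hpos.trans_le ((single_le_sum (fun j _ => hA.nonneg _ j _ _) hmem.2).trans ?_)
  exact single_le_sum (f := fun i => ∑ j ∈ Icc (-1 : ℤ) 1, A i j x.2.2 z.2.2)
    (fun i _ => sum_nonneg fun j _ => hA.nonneg i j _ _) hmem.1

theorem IsMMRW.isIrreducible_phaseMatrix (hA : IsMMRW A) (h1 : Assumption1 A) :
    (phaseMatrix A).IsIrreducible := by
  have hM := (mem_rowStochastic.1 hA.phaseMatrix_mem_rowStochastic).1
  refine (isIrreducible_iff_exists_pow_pos hM).2 fun a b => ?_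
  obtain ⟨N, hN⟩ := h1 (0, 0, a) (0, 0, b)
  exact ⟨N + 1, N.succ_pos, pow_apply_pos_of_kpow_ne_zero (fun x => x.2.2) hM
    (fun _ _ => hA.phaseMatrix_pos_of_ker_ne_zero) (hN (N + 1) N.le_succ).ne'⟩

theorem IsMMRW.exists_phase_potential (hA : IsMMRW A) (hirr : (phaseMatrix A).IsIrreducible)
    {π : Fin s₀ → ℝ} (hπM : π ᵥ* phaseMatrix A = π) (hπ1 : ∑ a, π a = 1) :
    ∃ g : Fin s₀ → ℝ, (∀ a, 1 ≤ g a) ∧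
      ∀ a, (phaseMatrix A *ᵥ g) a = g a - phaseDrift A a + a1 A π := by
  have hrow := hA.phaseMatrix_mem_rowStochastic
  obtain ⟨h, hh⟩ := hirr.exists_one_sub_mulVec_eq hrow hπM hπ1 (u := phaseDrift A - a1 A π • 1)
    (by rw [dotProduct_sub, dotProduct_smul, dotProduct_one, hπ1,
      a1_eq_dotProduct_phaseDrift, smul_eq_mul, mul_one, sub_self])
  obtain ⟨C, hC⟩ := Finite.bddBelow_range h
  refine ⟨h + (1 - C) • 1, fun a => ?_, fun a => ?_⟩
  · have := hC ⟨a, rfl⟩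
    simp only [Pi.add_apply, Pi.smul_apply, Pi.one_apply, smul_eq_mul, mul_one]
    linarith
  · have := congrFun hh a
    simp only [sub_mulVec, one_mulVec, mulVec_add, mulVec_smul,
      one_vecMul_of_mem_rowStochastic hrow] at this ⊢
    simp only [Pi.add_apply, Pi.sub_apply, Pi.smul_apply, Pi.one_apply, smul_eq_mul] at this ⊢
    linarith

theorem IsMMRW.tsum_ker_mul (hA : IsMMRW A) (x : ℤ × ℤ × Fin s₀)
    (f : ℤ × ℤ × Fin s₀ → ℝ≥0∞) :
    ∑' z, ker A x z * f z = ∑ i ∈ Icc (-1 : ℤ) 1, ∑ l ∈ Icc (-1 : ℤ) 1, ∑ b,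
      ENNReal.ofReal (A i l x.2.2 b) * f (x.1 + i, x.2.1 + l, b) := by
  rw [← ((Equiv.addLeft x.1).prodCongr ((Equiv.addLeft x.2.1).prodCongr
    (Equiv.refl (Fin s₀)))).tsum_eq, tsum_eq_sum (s := Icc (-1) 1 ×ˢ Icc (-1) 1 ×ˢ univ)]
  · simp [ker, sum_product]
  · intro w hw
    simp only [mem_product, mem_univ, and_true] at hw
    simp [ker, hA.skipfree _ _ (not_and_or.1 hw)]

theorem tsum_kerPlus_mul_le (f : ℤ × ℤ × Fin s₀ → ℝ≥0∞) (x : ℕ × ℕ × Fin s₀) :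
    ∑' y', kerPlus A x y' * f ((y'.1 : ℤ), (y'.2.1 : ℤ), y'.2.2) ≤
      ∑' z, ker A ((x.1 : ℤ), (x.2.1 : ℤ), x.2.2) z * f z :=
  ENNReal.tsum_comp_le_tsum_of_injective (g := fun z => ker A (x.1, x.2.1, x.2.2) z * f z)
    (Nat.cast_injective.prodMap (Nat.cast_injective.prodMap Function.injective_id))

/-- The mean of `x + ΔX₁ + g(J')` after one step from phase `j`. -/
theorem IsMMRW.sum_mul_add_eq (hA : IsMMRW A) (x : ℝ) (g : Fin s₀ → ℝ) (j : Fin s₀) :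
    ∑ i ∈ Icc (-1 : ℤ) 1, ∑ l ∈ Icc (-1 : ℤ) 1, ∑ b, A i l j b * (x + i + g b) =
      x + phaseDrift A j + (phaseMatrix A *ᵥ g) j := by
  calc ∑ i ∈ Icc (-1 : ℤ) 1, ∑ l ∈ Icc (-1 : ℤ) 1, ∑ b, A i l j b * (x + i + g b)
      = ∑ b, ∑ i ∈ Icc (-1 : ℤ) 1, ∑ l ∈ Icc (-1 : ℤ) 1, A i l j b * (x + i + g b) :=
        (sum_congr rfl fun _ _ => sum_comm).trans sum_comm
    _ = ∑ b, (x * phaseMatrix A j b + ∑ k ∈ Icc (-1 : ℤ) 1, (A 1 k j b - A (-1) k j b) +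
          phaseMatrix A j b * g b) :=
        sum_congr rfl fun b _ => by
          simp only [phaseMatrix_apply, sum_Icc_neg_one_one]
          push_cast
          ring
    _ = x + phaseDrift A j + (phaseMatrix A *ᵥ g) j := by
        rw [sum_add_distrib, sum_add_distrib, ← mul_sum,
          sum_row_of_mem_rowStochastic hA.phaseMatrix_mem_rowStochastic, mul_one]
        rfl

theorem IsMMRW.tsum_kerPlus_mul_add_le (hA : IsMMRW A) {g : Fin s₀ → ℝ} (hg : ∀ a, 1 ≤ g a)
    {c : ℝ} (hc : c ≤ 0) (hgM : ∀ a, (phaseMatrix A *ᵥ g) a = g a - phaseDrift A a + c)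
    (x : ℕ × ℕ × Fin s₀) :
    ∑' y', kerPlus A x y' * ENNReal.ofReal (y'.1 + g y'.2.2) + ENNReal.ofReal (-c) ≤
      ENNReal.ofReal (x.1 + g x.2.2) := by
  obtain ⟨x₁, x₂, j⟩ := x
  have hterm : ∀ i ∈ Icc (-1 : ℤ) 1, ∀ l b, 0 ≤ A i l j b * ((x₁ : ℝ) + i + g b) := by
    intro i hi l b
    have : (-1 : ℝ) ≤ i := by exact_mod_cast (mem_Icc.1 hi).1
    have hx₁ : (0 : ℝ) ≤ x₁ := Nat.cast_nonneg x₁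
    exact mul_nonneg (hA.nonneg _ _ _ _) (by linarith [hg b])
  have hsum_nonneg : 0 ≤ ∑ i ∈ Icc (-1 : ℤ) 1, ∑ l ∈ Icc (-1 : ℤ) 1, ∑ b,
      A i l j b * ((x₁ : ℝ) + i + g b) :=
    sum_nonneg fun i hi => sum_nonneg fun l _ => sum_nonneg fun b _ => hterm i hi l b
  have hmean := hA.sum_mul_add_eq x₁ g j
  rw [hgM] at hmean
  calc ∑' y', kerPlus A (x₁, x₂, j) y' * ENNReal.ofReal (y'.1 + g y'.2.2) + ENNReal.ofReal (-c)
      ≤ ∑' z, ker A (x₁, x₂, j) z * ENNReal.ofReal (z.1 + g z.2.2) + ENNReal.ofReal (-c) := by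
        gcongr
        simpa using tsum_kerPlus_mul_le (A := A) (fun z => ENNReal.ofReal (z.1 + g z.2.2))
          (x₁, x₂, j)
    _ = ENNReal.ofReal (∑ i ∈ Icc (-1 : ℤ) 1, ∑ l ∈ Icc (-1 : ℤ) 1, ∑ b,
          A i l j b * ((x₁ : ℝ) + i + g b)) + ENNReal.ofReal (-c) := by
        rw [hA.tsum_ker_mul, ENNReal.ofReal_sum_of_nonneg fun i hi =>
          sum_nonneg fun l _ => sum_nonneg fun b _ => hterm i hi l b]
        refine congrArg (· + _) (sum_congr rfl fun i hi => ?_)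
        rw [ENNReal.ofReal_sum_of_nonneg fun l _ => sum_nonneg fun b _ => hterm i hi l b]
        refine sum_congr rfl fun l _ => ?_
        rw [ENNReal.ofReal_sum_of_nonneg fun b _ => hterm i hi l b]
        refine sum_congr rfl fun b _ => ?_
        rw [ENNReal.ofReal_mul (hA.nonneg _ _ _ _), Int.cast_add, Int.cast_natCast]
    _ = ENNReal.ofReal (x₁ + g j) := by
        rw [← ENNReal.ofReal_add hsum_nonneg (neg_nonneg.2 hc), hmean]
        congr 1
        ring

theorem IsMMRW.Etau_ne_top_of_a1_neg (hA : IsMMRW A) (hirr : (phaseMatrix A).IsIrreducible)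
    {π : Fin s₀ → ℝ} (hπM : π ᵥ* phaseMatrix A = π) (hπ1 : ∑ a, π a = 1) (ha : a1 A π < 0)
    (y : ℕ × ℕ × Fin s₀) : Etau A y ≠ ⊤ := by
  obtain ⟨g, hg, hgM⟩ := hA.exists_phase_potential hirr hπM hπ1
  have hbound := mul_tsum_tsum_kpow_le (kerPlus A) (fun y => ENNReal.ofReal (y.1 + g y.2.2)) _
    (hA.tsum_kerPlus_mul_add_le hg ha.le hgM) y
  intro htop
  rw [← Etau, htop, ENNReal.mul_top (by simpa using ha)] at hbound
  exact ENNReal.ofReal_ne_top (top_le_iff.1 hbound)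

theorem IsMMRW.swap (hA : IsMMRW A) : IsMMRW fun i j => A j i where
  nonneg i j := hA.nonneg j i
  skipfree i j h := hA.skipfree j i h.symm
  stochastic a := by
    rw [Finset.sum_comm]
    exact hA.stochastic a

theorem phaseMatrix_swap (A : ℤ → ℤ → Matrix (Fin s₀) (Fin s₀) ℝ) :
    phaseMatrix (fun i j => A j i) = phaseMatrix A :=
  Finset.sum_comm

def swapCoords : ℕ × ℕ × Fin s₀ ≃ ℕ × ℕ × Fin s₀ where
  toFun y := (y.2.1, y.1, y.2.2)
  invFun y := (y.2.1, y.1, y.2.2)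
  left_inv _ := rfl
  right_inv _ := rfl

theorem Etau_swap (A : ℤ → ℤ → Matrix (Fin s₀) (Fin s₀) ℝ) (y : ℕ × ℕ × Fin s₀) :
    Etau A y = Etau (fun i j => A j i) (swapCoords y) := by
  refine tsum_congr fun n => ?_
  rw [← swapCoords.tsum_eq (kpow (kerPlus fun i j => A j i) n (swapCoords y))]
  exact tsum_congr fun y' =>
    (kpow_equiv_apply swapCoords (P := kerPlus A) (fun _ _ => rfl) n y y').symm

theorem occupation_measure_finite_general {s₀ : ℕ}
    (A : ℤ → ℤ → Matrix (Fin s₀) (Fin s₀) ℝ) (hA : IsMMRW A)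
    (h1 : Assumption1 A)
    (π : Fin s₀ → ℝ) (hπ : IsStationary A π) (ha : a1 A π < 0 ∨ a2 A π < 0) :
    ∀ y : ℕ × ℕ × Fin s₀,
      (∑' y' : ℕ × ℕ × Fin s₀, occ A y y') = Etau A y ∧
      (∑' y' : ℕ × ℕ × Fin s₀, occ A y y') ≠ ⊤ := by
  intro y
  have hocc : ∑' y', occ A y y' = Etau A y := ENNReal.tsum_comm
  refine ⟨hocc, hocc ▸ ?_⟩
  have hirr := hA.isIrreducible_phaseMatrix h1
  have hπM := hπ.vecMul_phaseMatrix
  rcases ha with ha | ha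
  · exact hA.Etau_ne_top_of_a1_neg hirr hπM hπ.2.1 ha y
  · rw [Etau_swap]
    rw [← phaseMatrix_swap A] at hirr hπM
    exact hA.swap.Etau_ne_top_of_a1_neg hirr hπM hπ.2.1 ha _

/-- Proposition 2.1: under Assumptions 1 and 3, if `a₁ < 0` or `a₂ < 0`,
then for every `y ∈ 𝕊₊` the occupation measure is finite; more precisely,
`Σ_{y'∈𝕊₊} q̃_{y,y'} = E(τ | Y₀ = y) < ∞`. -/
theorem occupation_measure_finite {s₀ : ℕ} (hs : 0 < s₀)
    (A : ℤ → ℤ → Matrix (Fin s₀) (Fin s₀) ℝ) (hA : IsMMRW A)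
    (h1 : Assumption1 A) (h3 : Assumption3 A)
    (π : Fin s₀ → ℝ) (hπ : IsStationary A π) (ha : a1 A π < 0 ∨ a2 A π < 0) :
    ∀ y : ℕ × ℕ × Fin s₀,
      (∑' y' : ℕ × ℕ × Fin s₀, occ A y y') = Etau A y ∧
      (∑' y' : ℕ × ℕ × Fin s₀, occ A y y') ≠ ⊤ :=
  occupation_measure_finite_general A hA h1 π hπ ha

end MMRW2d
end

section
/- Under Assumption 1, the closed convex set Γ̄={(θ₁,θ₂)∈ℝ²: χ(θ₁,θ₂)≤1} is bounded. -/
open scoped ENNReal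

namespace MMRW2d

variable {s₀ : ℕ}

/-!
Write `M(θ) = A_{*,*}(θ)` and `N_k(θ)` for the sum of the entries of `M(θ)^k`. Bounding the
spectrum of `M(θ)^k` by its row-sum norm gives `χ^k ≤ N_k`, and the trace of `M(θ)^k` is at most
`s₀ χ^k`. By irreducibility every transition `(0,0,a) → (d₁,d₂,b)` has a path, whose weight
`p e^{d₁θ₁+d₂θ₂}` (with `p > 0` independent of `θ`) is a lower bound for an entry of some power
`M(θ)^N`. Paths returning to the starting phase combine with the trace bound to show that on
`χ ≤ 1` all `N_k` stay below one constant `K`, so `Γ̄ = ⋂_k {N_k ≤ K}`: closed because each `N_k`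
is continuous, convex because each `N_k` is log-convex (Hölder). Paths from `(0,0,a)` back to
phase `a` at levels `(±1,0)`, `(0,±1)` give `p e^{±θᵢ} ≤ (M^N)_{aa} ≤ s₀` on `Γ̄`.
-/

section LogConvex

variable {E : Type*} [AddCommGroup E] [Module ℝ E]

/-- Log-convexity stated without logarithms, so that `f` may vanish. -/
structure IsLogConvex (f : E → ℝ) : Prop where
  nonneg : ∀ x, 0 ≤ f x
  le_rpow_mul_rpow : ∀ ⦃x y : E⦄ ⦃a b : ℝ⦄, 0 ≤ a → 0 ≤ b → a + b = 1 →
    f (a • x + b • y) ≤ f x ^ a * f y ^ b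

theorem sum_rpow_mul_rpow_le {ι : Type*} (s : Finset ι) {f g : ι → ℝ}
    (hf : ∀ i ∈ s, 0 ≤ f i) (hg : ∀ i ∈ s, 0 ≤ g i) {a b : ℝ} (ha : 0 ≤ a) (hb : 0 ≤ b)
    (hab : a + b = 1) :
    ∑ i ∈ s, f i ^ a * g i ^ b ≤ (∑ i ∈ s, f i) ^ a * (∑ i ∈ s, g i) ^ b := by
  rcases ha.eq_or_lt with rfl | ha
  · obtain rfl : b = 1 := by linarith
    simp
  rcases hb.eq_or_lt with rfl | hb
  · obtain rfl : a = 1 := by linarith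
    simp
  have key := Real.inner_le_Lp_mul_Lq_of_nonneg s (Real.HolderConjugate.inv_inv ha hb hab)
    (f := fun i => f i ^ a) (g := fun i => g i ^ b)
    (fun i hi => Real.rpow_nonneg (hf i hi) a) (fun i hi => Real.rpow_nonneg (hg i hi) b)
  simp only [one_div, inv_inv] at key
  rwa [Finset.sum_congr rfl fun i hi => Real.rpow_rpow_inv (hf i hi) ha.ne',
    Finset.sum_congr rfl fun i hi => Real.rpow_rpow_inv (hg i hi) hb.ne'] at key

namespace IsLogConvex

variable {f g : E → ℝ}

theorem const {c : ℝ} (hc : 0 ≤ c) : IsLogConvex fun _ : E => c where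
  nonneg _ := hc
  le_rpow_mul_rpow _ _ _ _ _ _ hab := by
    rw [← Real.rpow_add' hc (by rw [hab]; exact one_ne_zero), hab, Real.rpow_one]

theorem exp_comp (hg : ConvexOn ℝ Set.univ g) : IsLogConvex fun x => Real.exp (g x) where
  nonneg _ := (Real.exp_pos _).le
  le_rpow_mul_rpow x y a b ha hb hab := by
    rw [← Real.exp_mul, ← Real.exp_mul, ← Real.exp_add, mul_comm (g x), mul_comm (g y)]
    exact Real.exp_le_exp.mpr (hg.2 trivial trivial ha hb hab)

theorem mul (hf : IsLogConvex f) (hg : IsLogConvex g) : IsLogConvex fun x => f x * g x where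
  nonneg x := mul_nonneg (hf.nonneg x) (hg.nonneg x)
  le_rpow_mul_rpow x y a b ha hb hab := by
    calc f (a • x + b • y) * g (a • x + b • y)
        ≤ (f x ^ a * f y ^ b) * (g x ^ a * g y ^ b) :=
          mul_le_mul (hf.le_rpow_mul_rpow ha hb hab) (hg.le_rpow_mul_rpow ha hb hab)
            (hg.nonneg _) (by have := hf.nonneg x; have := hf.nonneg y; positivity)
      _ = (f x * g x) ^ a * (f y * g y) ^ b := by
          rw [Real.mul_rpow (hf.nonneg x) (hg.nonneg x), Real.mul_rpow (hf.nonneg y) (hg.nonneg y)]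
          ring

theorem sum {ι : Type*} (s : Finset ι) {f : ι → E → ℝ} (hf : ∀ i ∈ s, IsLogConvex (f i)) :
    IsLogConvex fun x => ∑ i ∈ s, f i x where
  nonneg x := Finset.sum_nonneg fun i hi => (hf i hi).nonneg x
  le_rpow_mul_rpow x y _ _ ha hb hab :=
    (Finset.sum_le_sum fun i hi => (hf i hi).le_rpow_mul_rpow ha hb hab).trans <|
      sum_rpow_mul_rpow_le s (fun i hi => (hf i hi).nonneg x) (fun i hi => (hf i hi).nonneg y)
        ha hb hab

theorem convex_le (hf : IsLogConvex f) (r : ℝ) : Convex ℝ {x | f x ≤ r} := by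
  intro x hx y hy a b ha hb hab
  have hr : 0 ≤ r := (hf.nonneg x).trans hx
  calc f (a • x + b • y) ≤ f x ^ a * f y ^ b := hf.le_rpow_mul_rpow ha hb hab
    _ ≤ r ^ a * r ^ b := by
        have := hf.nonneg x; have := hf.nonneg y
        gcongr
        exacts [hx, hy]
    _ = r := by rw [← Real.rpow_add' hr (by rw [hab]; exact one_ne_zero), hab, Real.rpow_one]

end IsLogConvex

end LogConvex

section NonnegMatrix

variable {n : Type*} [Fintype n] [DecidableEq n] {B : Matrix n n ℝ}

theorem pow_apply_nonneg (hB : ∀ i j, 0 ≤ B i j) (k : ℕ) (i j : n) : 0 ≤ (B ^ k) i j := by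
  induction k generalizing i j with
  | zero =>
    rw [pow_zero, Matrix.one_apply]
    split_ifs <;> norm_num
  | succ k ih =>
    rw [pow_succ, Matrix.mul_apply]
    exact Finset.sum_nonneg fun l _ => mul_nonneg (ih i l) (hB l j)

theorem pow_apply_mul_pow_apply_le (hB : ∀ i j, 0 ≤ B i j) (k m : ℕ) (i l j : n) :
    (B ^ k) i l * (B ^ m) l j ≤ (B ^ (k + m)) i j := by
  rw [pow_add, Matrix.mul_apply]
  exact Finset.single_le_sum (f := fun l => (B ^ k) i l * (B ^ m) l j)
    (fun l _ => mul_nonneg (pow_apply_nonneg hB k i l) (pow_apply_nonneg hB m l j))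
    (Finset.mem_univ l)

end NonnegMatrix

section SpectralRadius

theorem sprC_nonneg (M : Matrix (Fin s₀) (Fin s₀) ℂ) : 0 ≤ sprC M :=
  Real.sSup_nonneg (by rintro _ ⟨z, -, rfl⟩; exact norm_nonneg z)

theorem norm_le_sprC {M : Matrix (Fin s₀) (Fin s₀) ℂ} {z : ℂ} (hz : z ∈ spectrum ℂ M) :
    ‖z‖ ≤ sprC M :=
  le_csSup (M.finite_spectrum.image _).bddAbove ⟨z, hz, rfl⟩

theorem exists_mem_spectrum_norm_eq_sprC [NeZero s₀] (M : Matrix (Fin s₀) (Fin s₀) ℂ) :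
    ∃ z ∈ spectrum ℂ M, ‖z‖ = sprC M :=
  ((spectrum.nonempty_of_isAlgClosed_of_finiteDimensional ℂ M).image _).csSup_mem
    (M.finite_spectrum.image _)

theorem norm_trace_pow_le (M : Matrix (Fin s₀) (Fin s₀) ℂ) (k : ℕ) :
    ‖(M ^ k).trace‖ ≤ s₀ * sprC M ^ k := by
  rcases k.eq_zero_or_pos with rfl | hk
  · simp
  have hroots : ∀ μ ∈ (M ^ k).charpoly.roots, ‖μ‖ ≤ sprC M ^ k := by
    intro μ hμ
    rw [Polynomial.mem_roots', ← Matrix.mem_spectrum_iff_isRoot_charpoly,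
      spectrum.map_pow_of_pos _ hk] at hμ
    obtain ⟨w, hw, rfl⟩ := hμ.2
    rw [norm_pow]
    exact pow_le_pow_left₀ (norm_nonneg _) (norm_le_sprC hw) k
  rw [Matrix.trace_eq_sum_roots_charpoly]
  calc ‖(M ^ k).charpoly.roots.sum‖ ≤ ((M ^ k).charpoly.roots.map (‖·‖)).sum :=
        norm_multiset_sum_le _
    _ ≤ Multiset.card ((M ^ k).charpoly.roots.map (‖·‖)) • sprC M ^ k :=
        Multiset.sum_le_card_nsmul _ _ fun x hx => by
          obtain ⟨μ, hμ, rfl⟩ := Multiset.mem_map.mp hx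
          exact hroots μ hμ
    _ ≤ s₀ * sprC M ^ k := by
        rw [Multiset.card_map, nsmul_eq_mul]
        have := sprC_nonneg M
        gcongr
        exact_mod_cast (Polynomial.card_roots' _).trans
          (by simp [Matrix.charpoly_natDegree_eq_dim])

theorem map_ofReal_pow (B : Matrix (Fin s₀) (Fin s₀) ℝ) (k : ℕ) :
    (B ^ k).map Complex.ofReal = B.map Complex.ofReal ^ k :=
  Matrix.map_pow B Complex.ofRealHom k

variable {B : Matrix (Fin s₀) (Fin s₀) ℝ}

open scoped Matrix.Norms.Operator in
theorem norm_le_sum_of_mem_spectrum [NeZero s₀] (hB : ∀ i j, 0 ≤ B i j) {z : ℂ}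
    (hz : z ∈ spectrum ℂ (B.map Complex.ofReal)) : ‖z‖ ≤ ∑ i, ∑ j, B i j := by
  refine (spectrum.norm_le_norm_of_mem hz).trans ?_
  obtain ⟨i, -, hi⟩ := Finset.exists_mem_eq_sup Finset.univ Finset.univ_nonempty
    fun i => ∑ j, ‖B.map Complex.ofReal i j‖₊
  rw [Matrix.linfty_opNorm_def, hi, NNReal.coe_sum]
  refine le_of_eq_of_le ?_ (Finset.single_le_sum (fun i _ => Finset.sum_nonneg fun j _ => hB i j)
    (Finset.mem_univ i))
  simp [abs_of_nonneg (hB _ _)]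

theorem sprC_pow_le_sum_pow_apply [NeZero s₀] (hB : ∀ i j, 0 ≤ B i j) (k : ℕ) :
    sprC (B.map Complex.ofReal) ^ k ≤ ∑ i, ∑ j, (B ^ k) i j := by
  obtain ⟨z, hz, hzr⟩ := exists_mem_spectrum_norm_eq_sprC (B.map Complex.ofReal)
  rw [← hzr, ← norm_pow]
  refine norm_le_sum_of_mem_spectrum (pow_apply_nonneg hB k) ?_
  rw [map_ofReal_pow]
  exact spectrum.pow_mem_pow _ k hz

theorem pow_apply_self_le_mul_sprC_pow (hB : ∀ i j, 0 ≤ B i j) (k : ℕ) (i : Fin s₀) :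
    (B ^ k) i i ≤ s₀ * sprC (B.map Complex.ofReal) ^ k := by
  calc (B ^ k) i i ≤ (B ^ k).trace :=
        Finset.single_le_sum (fun j _ => pow_apply_nonneg hB k j j) (Finset.mem_univ i)
    _ ≤ ‖(((B.map Complex.ofReal) ^ k).trace)‖ := by
        rw [← map_ofReal_pow, show ((B ^ k).map Complex.ofReal).trace = ((B ^ k).trace : ℂ) from
          (AddMonoidHom.map_trace Complex.ofRealHom _).symm, Complex.norm_real]
        exact Real.le_norm_self _
    _ ≤ _ := norm_trace_pow_le _ k

end SpectralRadius

theorem le_one_of_forall_pow_le {x K : ℝ} (h : ∀ n : ℕ, x ^ n ≤ K) : x ≤ 1 := by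
  by_contra! hx
  obtain ⟨n, hn⟩ := pow_unbounded_of_one_lt K hx
  exact (h n).not_gt hn

section RandomWalk

variable {A : ℤ → ℤ → Matrix (Fin s₀) (Fin s₀) ℝ}

theorem Ass_apply (A : ℤ → ℤ → Matrix (Fin s₀) (Fin s₀) ℝ) (θ₁ θ₂ : ℝ) (a b : Fin s₀) :
    Ass A θ₁ θ₂ a b = ∑ i ∈ Finset.Icc (-1 : ℤ) 1, ∑ j ∈ Finset.Icc (-1 : ℤ) 1,
      Real.exp ((i : ℝ) * θ₁ + (j : ℝ) * θ₂) * A i j a b := by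
  simp [Ass, Matrix.sum_apply]

theorem Ass_apply_nonneg (hA : IsMMRW A) (θ₁ θ₂ : ℝ) (a b : Fin s₀) : 0 ≤ Ass A θ₁ θ₂ a b := by
  rw [Ass_apply]
  exact Finset.sum_nonneg fun i _ => Finset.sum_nonneg fun j _ =>
    mul_nonneg (Real.exp_pos _).le (hA.nonneg _ _ _ _)

theorem exp_mul_le_Ass_apply (hA : IsMMRW A) {i j : ℤ} (hi : i ∈ Finset.Icc (-1 : ℤ) 1)
    (hj : j ∈ Finset.Icc (-1 : ℤ) 1) (θ₁ θ₂ : ℝ) (a b : Fin s₀) :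
    Real.exp ((i : ℝ) * θ₁ + (j : ℝ) * θ₂) * A i j a b ≤ Ass A θ₁ θ₂ a b := by
  have hterm : ∀ i j : ℤ, 0 ≤ Real.exp ((i : ℝ) * θ₁ + (j : ℝ) * θ₂) * A i j a b :=
    fun i j => mul_nonneg (Real.exp_pos _).le (hA.nonneg _ _ _ _)
  rw [Ass_apply]
  refine (Finset.single_le_sum (fun j _ => hterm i j) hj).trans ?_
  exact Finset.single_le_sum (f := fun i => ∑ j ∈ Finset.Icc (-1 : ℤ) 1, _)
    (fun i _ => Finset.sum_nonneg fun j _ => hterm i j) hi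

theorem continuous_Ass (A : ℤ → ℤ → Matrix (Fin s₀) (Fin s₀) ℝ) :
    Continuous fun θ : ℝ × ℝ => Ass A θ.1 θ.2 :=
  continuous_finsetSum _ fun _ _ => continuous_finsetSum _ fun _ _ =>
    (Real.continuous_exp.comp (by fun_prop)).smul continuous_const

theorem isLogConvex_Ass_apply (hA : IsMMRW A) (a b : Fin s₀) :
    IsLogConvex fun θ : ℝ × ℝ => Ass A θ.1 θ.2 a b := by
  simp_rw [Ass_apply]
  refine IsLogConvex.sum _ fun i _ => IsLogConvex.sum _ fun j _ =>
    (IsLogConvex.exp_comp ?_).mul (IsLogConvex.const (hA.nonneg i j a b))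
  exact ((i : ℝ) • LinearMap.fst ℝ ℝ ℝ + (j : ℝ) • LinearMap.snd ℝ ℝ ℝ).convexOn convex_univ

theorem isLogConvex_Ass_pow_apply (hA : IsMMRW A) (k : ℕ) (a b : Fin s₀) :
    IsLogConvex fun θ : ℝ × ℝ => (Ass A θ.1 θ.2 ^ k) a b := by
  induction k generalizing a b with
  | zero =>
    simp only [pow_zero]
    exact IsLogConvex.const (by rw [Matrix.one_apply]; split_ifs <;> norm_num)
  | succ k ih =>
    simp_rw [pow_succ', Matrix.mul_apply]
    exact IsLogConvex.sum _ fun c _ => (isLogConvex_Ass_apply hA a c).mul (ih c b)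

theorem exists_pos_mul_exp_le_Ass_pow_apply (hA : IsMMRW A) {k : ℕ} {y y' : ℤ × ℤ × Fin s₀}
    (h : 0 < kpow (ker A) k y y') :
    ∃ p > 0, ∀ θ₁ θ₂ : ℝ,
      p * Real.exp (((y'.1 - y.1 : ℤ) : ℝ) * θ₁ + ((y'.2.1 - y.2.1 : ℤ) : ℝ) * θ₂)
        ≤ (Ass A θ₁ θ₂ ^ k) y.2.2 y'.2.2 := by
  induction k generalizing y with
  | zero =>
    obtain rfl : y = y' := by by_contra hne; simp [kpow, hne] at h
    exact ⟨1, one_pos, fun θ₁ θ₂ => by simp⟩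
  | succ k ih =>
    obtain ⟨z, hz⟩ : ∃ z, 0 < ker A y z * kpow (ker A) k z y' := by
      by_contra! hz
      simp [kpow, kmul, nonpos_iff_eq_zero.mp (hz _)] at h
    obtain ⟨hyz, hzy'⟩ := ENNReal.mul_pos_iff.mp hz
    have hstep : 0 < A (z.1 - y.1) (z.2.1 - y.2.1) y.2.2 z.2.2 := ENNReal.ofReal_pos.mp hyz
    have hskip : z.1 - y.1 ∈ Finset.Icc (-1 : ℤ) 1 ∧ z.2.1 - y.2.1 ∈ Finset.Icc (-1 : ℤ) 1 := by
      by_contra hout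
      rw [hA.skipfree _ _ (not_and_or.mp hout)] at hstep
      exact hstep.false
    obtain ⟨p, hp, hpath⟩ := ih hzy'
    refine ⟨A (z.1 - y.1) (z.2.1 - y.2.1) y.2.2 z.2.2 * p, mul_pos hstep hp, fun θ₁ θ₂ => ?_⟩
    have hexp : Real.exp (((y'.1 - y.1 : ℤ) : ℝ) * θ₁ + ((y'.2.1 - y.2.1 : ℤ) : ℝ) * θ₂)
        = Real.exp (((z.1 - y.1 : ℤ) : ℝ) * θ₁ + ((z.2.1 - y.2.1 : ℤ) : ℝ) * θ₂) *
          Real.exp (((y'.1 - z.1 : ℤ) : ℝ) * θ₁ + ((y'.2.1 - z.2.1 : ℤ) : ℝ) * θ₂) := by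
      rw [← Real.exp_add]
      push_cast
      ring_nf
    calc A (z.1 - y.1) (z.2.1 - y.2.1) y.2.2 z.2.2 * p *
          Real.exp (((y'.1 - y.1 : ℤ) : ℝ) * θ₁ + ((y'.2.1 - y.2.1 : ℤ) : ℝ) * θ₂)
        = (Real.exp (((z.1 - y.1 : ℤ) : ℝ) * θ₁ + ((z.2.1 - y.2.1 : ℤ) : ℝ) * θ₂) *
            A (z.1 - y.1) (z.2.1 - y.2.1) y.2.2 z.2.2) *
          (p * Real.exp (((y'.1 - z.1 : ℤ) : ℝ) * θ₁ + ((y'.2.1 - z.2.1 : ℤ) : ℝ) * θ₂)) := by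
          rw [hexp]
          ring
      _ ≤ (Ass A θ₁ θ₂ ^ 1) y.2.2 z.2.2 * (Ass A θ₁ θ₂ ^ k) z.2.2 y'.2.2 := by
          rw [pow_one]
          exact mul_le_mul (exp_mul_le_Ass_apply hA hskip.1 hskip.2 θ₁ θ₂ _ _) (hpath θ₁ θ₂)
            (by positivity) (Ass_apply_nonneg hA _ _ _ _)
      _ ≤ (Ass A θ₁ θ₂ ^ (k + 1)) y.2.2 y'.2.2 := by
          rw [add_comm]
          exact pow_apply_mul_pow_apply_le (Ass_apply_nonneg hA θ₁ θ₂) 1 k _ _ _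

noncomputable def powMass (A : ℤ → ℤ → Matrix (Fin s₀) (Fin s₀) ℝ) (k : ℕ) (θ : ℝ × ℝ) : ℝ :=
  ∑ a, ∑ b, (Ass A θ.1 θ.2 ^ k) a b

theorem continuous_powMass (A : ℤ → ℤ → Matrix (Fin s₀) (Fin s₀) ℝ) (k : ℕ) :
    Continuous (powMass A k) :=
  continuous_finsetSum _ fun a _ => continuous_finsetSum _ fun b _ =>
    ((continuous_Ass A).pow k).matrix_elem a b

theorem isLogConvex_powMass (hA : IsMMRW A) (k : ℕ) : IsLogConvex (powMass A k) :=
  IsLogConvex.sum _ fun a _ => IsLogConvex.sum _ fun b _ => isLogConvex_Ass_pow_apply hA k a b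

theorem chi_pow_le_powMass [NeZero s₀] (hA : IsMMRW A) (k : ℕ) (θ : ℝ × ℝ) :
    chi A θ.1 θ.2 ^ k ≤ powMass A k θ :=
  sprC_pow_le_sum_pow_apply (Ass_apply_nonneg hA θ.1 θ.2) k

theorem Ass_pow_apply_self_le (hA : IsMMRW A) {θ : ℝ × ℝ} (hθ : θ ∈ GammaBar A) (k : ℕ)
    (a : Fin s₀) : (Ass A θ.1 θ.2 ^ k) a a ≤ s₀ :=
  (pow_apply_self_le_mul_sprC_pow (Ass_apply_nonneg hA θ.1 θ.2) k a).trans <|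
    mul_le_of_le_one_right (Nat.cast_nonneg _) (pow_le_one₀ (sprC_nonneg _) hθ)

/-- A path of weight `p` from phase `b` to phase `a` in `N` steps gives
`(Ass ^ k) a b * p ≤ (Ass ^ (k + N)) a a ≤ s₀`. -/
theorem exists_forall_Ass_pow_apply_le (hA : IsMMRW A) (h1 : Assumption1 A) (a b : Fin s₀) :
    ∃ C, ∀ θ ∈ GammaBar A, ∀ k, (Ass A θ.1 θ.2 ^ k) a b ≤ C := by
  obtain ⟨N, hN⟩ := h1 (0, 0, b) (0, 0, a)
  obtain ⟨p, hp, hpath⟩ := exists_pos_mul_exp_le_Ass_pow_apply hA (hN N le_rfl)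
  refine ⟨s₀ / p, fun θ hθ k => ?_⟩
  have hM := Ass_apply_nonneg hA θ.1 θ.2
  rw [le_div_iff₀ hp]
  calc (Ass A θ.1 θ.2 ^ k) a b * p ≤ (Ass A θ.1 θ.2 ^ k) a b * (Ass A θ.1 θ.2 ^ N) b a :=
        mul_le_mul_of_nonneg_left (by simpa using hpath θ.1 θ.2) (pow_apply_nonneg hM k a b)
    _ ≤ (Ass A θ.1 θ.2 ^ (k + N)) a a := pow_apply_mul_pow_apply_le hM k N a b a
    _ ≤ s₀ := Ass_pow_apply_self_le hA hθ _ a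

theorem exists_gammaBar_eq_iInter [NeZero s₀] (hA : IsMMRW A) (h1 : Assumption1 A) :
    ∃ K, GammaBar A = ⋂ k, {θ | powMass A k θ ≤ K} := by
  choose C hC using exists_forall_Ass_pow_apply_le hA h1
  refine ⟨∑ a, ∑ b, C a b, Set.Subset.antisymm (fun θ hθ => Set.mem_iInter.2 fun k => ?_)
    fun θ hθ => ?_⟩
  · exact Finset.sum_le_sum fun a _ => Finset.sum_le_sum fun b _ => hC a b θ hθ k
  · exact le_one_of_forall_pow_le fun k =>
      (chi_pow_le_powMass hA k θ).trans (Set.mem_iInter.1 hθ k)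

theorem exists_forall_mem_gammaBar_le [NeZero s₀] (hA : IsMMRW A) (h1 : Assumption1 A)
    (d₁ d₂ : ℤ) : ∃ C, ∀ θ ∈ GammaBar A, d₁ * θ.1 + d₂ * θ.2 ≤ C := by
  obtain ⟨N, hN⟩ := h1 (0, 0, 0) (d₁, d₂, 0)
  obtain ⟨p, hp, hpath⟩ := exists_pos_mul_exp_le_Ass_pow_apply hA (hN N le_rfl)
  have hs₀ : (0 : ℝ) < s₀ := Nat.cast_pos.2 (Nat.pos_of_neZero s₀)
  refine ⟨Real.log (s₀ / p), fun θ hθ => ?_⟩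
  rw [← Real.exp_le_exp, Real.exp_log (div_pos hs₀ hp), le_div_iff₀' hp]
  simpa using (hpath θ.1 θ.2).trans (Ass_pow_apply_self_le hA hθ N 0)

theorem isBounded_gammaBar [NeZero s₀] (hA : IsMMRW A) (h1 : Assumption1 A) :
    Bornology.IsBounded (GammaBar A) := by
  obtain ⟨C₁, h₁⟩ := exists_forall_mem_gammaBar_le hA h1 1 0
  obtain ⟨C₂, h₂⟩ := exists_forall_mem_gammaBar_le hA h1 (-1) 0
  obtain ⟨C₃, h₃⟩ := exists_forall_mem_gammaBar_le hA h1 0 1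
  obtain ⟨C₄, h₄⟩ := exists_forall_mem_gammaBar_le hA h1 0 (-1)
  refine ((Metric.isBounded_Icc (-C₂) C₁).prod (Metric.isBounded_Icc (-C₄) C₃)).subset
    fun θ hθ => ?_
  have e₁ := h₁ θ hθ
  have e₂ := h₂ θ hθ
  have e₃ := h₃ θ hθ
  have e₄ := h₄ θ hθ
  simp only [Int.cast_one, Int.cast_zero, Int.cast_neg, one_mul, zero_mul, neg_one_mul,
    add_zero, zero_add] at e₁ e₂ e₃ e₄
  exact ⟨⟨by linarith, by linarith⟩, ⟨by linarith, by linarith⟩⟩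

end RandomWalk

/-- Proposition 2.3: under Assumption 1, the closed convex set
`Γ̄ = {(θ₁,θ₂) ∈ ℝ² : χ(θ₁,θ₂) ≤ 1}` is bounded. -/
theorem gammaBar_bounded {s₀ : ℕ} (hs : 0 < s₀)
    (A : ℤ → ℤ → Matrix (Fin s₀) (Fin s₀) ℝ) (hA : IsMMRW A) (h1 : Assumption1 A) :
    IsClosed (GammaBar A) ∧ Convex ℝ (GammaBar A) ∧ Bornology.IsBounded (GammaBar A) := by
  have : NeZero s₀ := ⟨hs.ne'⟩
  obtain ⟨K, hK⟩ := exists_gammaBar_eq_iInter hA h1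
  refine ⟨?_, ?_, isBounded_gammaBar hA h1⟩
  · rw [hK]
    exact isClosed_iInter fun k => isClosed_le (continuous_powMass A k) continuous_const
  · rw [hK]
    exact convex_iInter fun k => (isLogConvex_powMass hA k).convex_le K
end MMRW2d
end

section
/- Under Assumptions 1, 2 and 3, for every y,y'∈𝕊₊, k∈ℤ₊ and l∈S₀, the radii of convergence satisfy r^(1)_{y,(k,l)}=r^(1)_{y',(k,l)} and r^(2)_{y,(k,l)}=r^(2)_{y',(k,l)}; i.e., the radii of convergence of the generating functions of the occupation measure along the two coordinate directions do not depend on the initial state. -/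
open scoped ENNReal

namespace MMRW2d

variable {s₀ : ℕ}

section AuxLemmas

/-- Chapman–Kolmogorov lower bound for kernel powers. -/
lemma kpow_add_ge {α : Type*} [DecidableEq α] (p : α → α → ℝ≥0∞) :
    ∀ (n m : ℕ) (i w j : α), kpow p n i w * kpow p m w j ≤ kpow p (n + m) i j := by
  intro n
  induction n with
  | zero =>
    intro m i w j
    simp only [kpow, Nat.zero_add]
    by_cases h : i = w
    · subst h; simp
    · simp [h]
  | succ n ih =>
    intro m i w j
    have h1 : n + 1 + m = (n + m) + 1 := by ring
    rw [h1]
    show (∑' k, p i k * kpow p n k w) * kpow p m w j ≤ ∑' k, p i k * kpow p (n + m) k j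
    rw [← ENNReal.tsum_mul_right]
    refine ENNReal.tsum_le_tsum fun k => ?_
    rw [mul_assoc]
    exact mul_le_mul_right (ih m k w j) _

/-- Substochastic kernels have substochastic powers. -/
lemma kpow_rowsum_le {α : Type*} [DecidableEq α] (p : α → α → ℝ≥0∞)
    (hp : ∀ i, ∑' j, p i j ≤ 1) : ∀ n i, ∑' j, kpow p n i j ≤ 1 := by
  intro n
  induction n with
  | zero =>
    intro i
    simp only [kpow]
    have : ∑' j, (if i = j then (1:ℝ≥0∞) else 0) = 1 := by
      simp only [eq_comm (a := i)]
      exact tsum_ite_eq i 1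
    rw [this]
  | succ n ih =>
    intro i
    show ∑' j, ∑' k, p i k * kpow p n k j ≤ 1
    rw [ENNReal.tsum_comm]
    calc ∑' k, ∑' j, p i k * kpow p n k j = ∑' k, p i k * ∑' j, kpow p n k j := by
          simp [ENNReal.tsum_mul_left]
      _ ≤ ∑' k, p i k := ENNReal.tsum_le_tsum fun k =>
          mul_le_of_le_one_right zero_le (ih k)
      _ ≤ 1 := hp i

lemma kpow_le_one {α : Type*} [DecidableEq α] (p : α → α → ℝ≥0∞)
    (hp : ∀ i, ∑' j, p i j ≤ 1) (n : ℕ) (i j : α) : kpow p n i j ≤ 1 :=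
  le_trans (ENNReal.le_tsum j) (kpow_rowsum_le p hp n i)

/-- `P₊` is substochastic. -/
lemma kerPlus_rowsum_le {s₀ : ℕ} (A : ℤ → ℤ → Matrix (Fin s₀) (Fin s₀) ℝ) (hA : IsMMRW A)
    (y : ℕ × ℕ × Fin s₀) : ∑' y', kerPlus A y y' ≤ 1 := by
  rw [ENNReal.tsum_eq_iSup_sum]
  refine iSup_le fun F => ?_
  set g : ℤ × ℤ × Fin s₀ → ℝ≥0∞ := fun z => ENNReal.ofReal (A z.1 z.2.1 y.2.2 z.2.2) with hg
  set ι : ℕ × ℕ × Fin s₀ → ℤ × ℤ × Fin s₀ :=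
    fun y' => (((y'.1 : ℤ) - (y.1 : ℤ)), ((y'.2.1 : ℤ) - (y.2.1 : ℤ)), y'.2.2) with hι
  have hinj : Set.InjOn ι F := by
    intro a _ b _ hab
    simp only [hι, Prod.mk.injEq] at hab
    obtain ⟨h1, h2, h3⟩ := hab
    have : (a.1 : ℤ) = b.1 := by linarith
    have h1' : a.1 = b.1 := by exact_mod_cast this
    have : (a.2.1 : ℤ) = b.2.1 := by linarith
    have h2' : a.2.1 = b.2.1 := by exact_mod_cast this
    exact Prod.ext h1' (Prod.ext h2' h3)
  have hsum : ∑ y' ∈ F, kerPlus A y y' = ∑ z ∈ F.image ι, g z := by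
    rw [Finset.sum_image (fun a ha b hb => hinj ha hb)]
    exact Finset.sum_congr rfl fun x _ => rfl
  rw [hsum]
  have hsub : ∑ z ∈ F.image ι, g z ≤
      ∑ z ∈ (Finset.Icc (-1:ℤ) 1) ×ˢ (Finset.Icc (-1:ℤ) 1) ×ˢ (Finset.univ : Finset (Fin s₀)),
        g z := by
    refine Finset.sum_le_sum_of_ne_zero fun z _ hz => ?_
    by_contra hmem
    have : A z.1 z.2.1 = 0 := by
      refine hA.skipfree z.1 z.2.1 ?_
      simp only [Finset.mem_product, Finset.mem_univ, and_true, not_and_or] at hmem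
      tauto
    exact hz (by simp [hg, this])
  refine hsub.trans ?_
  have : ∑ z ∈ (Finset.Icc (-1:ℤ) 1) ×ˢ (Finset.Icc (-1:ℤ) 1) ×ˢ (Finset.univ : Finset (Fin s₀)),
      g z = ENNReal.ofReal (∑ i ∈ Finset.Icc (-1:ℤ) 1, ∑ j ∈ Finset.Icc (-1:ℤ) 1,
        ∑ b, A i j y.2.2 b) := by
    rw [Finset.sum_product]
    rw [ENNReal.ofReal_sum_of_nonneg (fun i _ => Finset.sum_nonneg fun j _ =>
      Finset.sum_nonneg fun b _ => hA.nonneg i j y.2.2 b)]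
    refine Finset.sum_congr rfl fun i _ => ?_
    rw [Finset.sum_product]
    rw [ENNReal.ofReal_sum_of_nonneg (fun j _ => Finset.sum_nonneg fun b _ =>
      hA.nonneg i j y.2.2 b)]
    refine Finset.sum_congr rfl fun j _ => ?_
    rw [ENNReal.ofReal_sum_of_nonneg (fun b _ => hA.nonneg i j y.2.2 b)]
  rw [this, hA.stochastic y.2.2, ENNReal.ofReal_one]

/-- Occupation measure comparison. -/
lemma occ_lower {s₀ : ℕ} (A : ℤ → ℤ → Matrix (Fin s₀) (Fin s₀) ℝ) (n : ℕ)
    (y y' z : ℕ × ℕ × Fin s₀) :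
    kpow (kerPlus A) n y y' * occ A y' z ≤ occ A y z := by
  unfold occ
  rw [← ENNReal.tsum_mul_left]
  calc ∑' m, kpow (kerPlus A) n y y' * kpow (kerPlus A) m y' z
      ≤ ∑' m, kpow (kerPlus A) (n + m) y z :=
        ENNReal.tsum_le_tsum fun m => kpow_add_ge _ n m y y' z
    _ ≤ ∑' m, kpow (kerPlus A) m y z :=
        ENNReal.tsum_comp_le_tsum_of_injective (add_right_injective n)
          (fun m => kpow (kerPlus A) m y z)

/-- If the generating series is finite starting from `y'`, it is finite from any `y`. -/
lemma genfun_ne_top {s₀ : ℕ} (A : ℤ → ℤ → Matrix (Fin s₀) (Fin s₀) ℝ) (hA : IsMMRW A)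
    (h3 : Assumption3 A) (y y' : ℕ × ℕ × Fin s₀) (g : ℕ → ℕ × ℕ × Fin s₀) (r : ℝ≥0∞)
    (h : (∑' k, r ^ k * occ A y' (g k)) ≠ ⊤) :
    (∑' k, r ^ k * occ A y (g k)) ≠ ⊤ := by
  obtain ⟨n, -, hc⟩ := h3 y' y
  set c := kpow (kerPlus A) n y' y with hcdef
  have hbound : c * ∑' k, r ^ k * occ A y (g k) ≤ ∑' k, r ^ k * occ A y' (g k) := by
    rw [← ENNReal.tsum_mul_left]
    refine ENNReal.tsum_le_tsum fun k => ?_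
    rw [mul_left_comm]
    exact mul_le_mul_right (occ_lower A n y' y (g k)) _
  intro htop
  rw [htop, ENNReal.mul_top hc.ne'] at hbound
  exact h (top_le_iff.mp hbound)

end AuxLemmas

/-- Proposition 4.1: under Assumptions 1, 2 and 3, for every
`y,y' ∈ 𝕊₊`, `k ∈ ℤ₊` and `l ∈ S₀`, `r^{(1)}_{y,(k,l)} = r^{(1)}_{y',(k,l)}` and
`r^{(2)}_{y,(k,l)} = r^{(2)}_{y',(k,l)}`: the radii of convergence of the generating
functions of the occupation measure along the coordinate directions do not depend on the
initial state. -/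
theorem radii_independent_of_initial_state {s₀ : ℕ} (hs : 0 < s₀)
    (A : ℤ → ℤ → Matrix (Fin s₀) (Fin s₀) ℝ) (hA : IsMMRW A)
    (h1 : Assumption1 A) (h2 : Assumption2 A) (h3 : Assumption3 A) :
    ∀ y y' : ℕ × ℕ × Fin s₀, ∀ k : ℕ, ∀ l : Fin s₀,
      r1 A y k l = r1 A y' k l ∧ r2 A y k l = r2 A y' k l := by
  intro y y' k l
  constructor
  · show sSup _ = sSup _
    congr 1
    ext r
    simp only [Set.mem_setOf_eq]
    exact ⟨fun h => genfun_ne_top A hA h3 y' y (fun m => (m, k, l)) r h,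
           fun h => genfun_ne_top A hA h3 y y' (fun m => (m, k, l)) r h⟩
  · show sSup _ = sSup _
    congr 1
    ext r
    simp only [Set.mem_setOf_eq]
    exact ⟨fun h => genfun_ne_top A hA h3 y' y (fun m => (k, m, l)) r h,
           fun h => genfun_ne_top A hA h3 y y' (fun m => (k, m, l)) r h⟩
end MMRW2d
end

section
/- Under Assumptions 1, 2 and 3, for every x,x'∈ℤ₊², 𝒟_x=𝒟_{x'}; i.e., the convergence domain of the matrix moment generating function of the occupation measures does not depend on the initial level. -/
open scoped ENNReal

namespace MMRW2d

variable {s₀ : ℕ}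

lemma kpow_add {α : Type*} [DecidableEq α] (p : α → α → ℝ≥0∞) (n m : ℕ) (i j : α) :
    kpow p (n + m) i j = ∑' k, kpow p n i k * kpow p m k j := by
  induction n generalizing i j with
  | zero =>
    simp only [Nat.zero_add, kpow]
    rw [tsum_eq_single i]
    · simp
    · intro b hb; simp [Ne.symm hb]
  | succ n ih =>
    have h : n + 1 + m = (n + m) + 1 := by omega
    rw [h]
    show kmul p (kpow p (n + m)) i j = ∑' k, kmul p (kpow p n) i k * kpow p m k j
    unfold kmul
    calc ∑' k, p i k * kpow p (n + m) k j
        = ∑' k, p i k * ∑' l, kpow p n k l * kpow p m l j := by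
          exact tsum_congr fun k => by rw [ih]
      _ = ∑' k, ∑' l, p i k * (kpow p n k l * kpow p m l j) := by
          exact tsum_congr fun k => ENNReal.tsum_mul_left.symm
      _ = ∑' l, ∑' k, p i k * (kpow p n k l * kpow p m l j) := ENNReal.tsum_comm
      _ = ∑' l, (∑' k, p i k * kpow p n k l) * kpow p m l j := by
          refine tsum_congr fun l => ?_
          rw [← ENNReal.tsum_mul_right]
          exact tsum_congr fun k => by ring

lemma occ_ge {s₀ : ℕ} (A : ℤ → ℤ → Matrix (Fin s₀) (Fin s₀) ℝ) (n : ℕ)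
    (y z y' : ℕ × ℕ × Fin s₀) :
    kpow (kerPlus A) n y z * occ A z y' ≤ occ A y y' := by
  unfold occ
  rw [← ENNReal.tsum_mul_left]
  calc ∑' m, kpow (kerPlus A) n y z * kpow (kerPlus A) m z y'
      ≤ ∑' m, kpow (kerPlus A) (n + m) y y' := by
        refine ENNReal.tsum_le_tsum fun m => ?_
        rw [kpow_add]
        exact ENNReal.le_tsum z
    _ ≤ ∑' m, kpow (kerPlus A) m y y' := by
        exact ENNReal.tsum_comp_le_tsum_of_injective
          (f := fun m => n + m) (add_right_injective n) _

lemma phi_ge {s₀ : ℕ} (A : ℤ → ℤ → Matrix (Fin s₀) (Fin s₀) ℝ) (n : ℕ)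
    (x x' : ℕ × ℕ) (j j0 j' : Fin s₀) (θ : ℝ × ℝ) :
    kpow (kerPlus A) n (x.1, x.2, j) (x'.1, x'.2, j0) * Phi A x' θ j0 j' ≤ Phi A x θ j j' := by
  unfold Phi
  rw [← ENNReal.tsum_mul_left]
  refine ENNReal.tsum_le_tsum fun k => ?_
  rw [mul_left_comm]
  exact mul_le_mul_right (occ_ge A n _ _ _) _

/-- Proposition 4.3: under Assumptions 1, 2 and 3, for every
`x,x' ∈ ℤ₊²`, `𝒟_x = 𝒟_{x'}`: the convergence domain of the matrix moment generating
function of the occupation measures does not depend on the initial level. -/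
theorem domPhi_independent {s₀ : ℕ} (hs : 0 < s₀)
    (A : ℤ → ℤ → Matrix (Fin s₀) (Fin s₀) ℝ) (hA : IsMMRW A)
    (h1 : Assumption1 A) (h2 : Assumption2 A) (h3 : Assumption3 A) :
    ∀ x x' : ℕ × ℕ, domPhi A x = domPhi A x' := by
  have key : ∀ x x' : ℕ × ℕ,
      {θ : ℝ × ℝ | ∀ j j', Phi A x θ j j' ≠ ⊤} ⊆
        {θ : ℝ × ℝ | ∀ j j', Phi A x' θ j j' ≠ ⊤} := by
    intro x x' θ hθ j0 j' htop
    obtain ⟨n, -, hn2⟩ := h3 (x.1, x.2, ⟨0, hs⟩) (x'.1, x'.2, j0)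
    have hle := phi_ge A n x x' ⟨0, hs⟩ j0 j' θ
    rw [htop, ENNReal.mul_top hn2.ne'] at hle
    exact hθ ⟨0, hs⟩ j' (top_le_iff.mp hle)
  intro x x'
  have h := Set.Subset.antisymm (key x x') (key x' x)
  rw [domPhi, domPhi, h]
end MMRW2d
end
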